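/- Let n ≥ 2 be an integer, let γ ≥ λ > 0, and set α = (γ/λ)^{1/n}. Let φ : (0,1) → ℝ be a positive C² function satisfying φ(β)(1 + (φ'(β)/(n−1))²)^{(n−1)/2} = 1/γ for all β ∈ (0,1), and let u : (0,1) → ℝ be a continuous positive viscosity supersolution of ψ(1 + (ψ'/(n−1))²)^{(n−1)/2} = 1/λ on (0,1). If liminf_{β→0⁺} u(β)/(αφ(β)) ≥ 1 and liminf_{β→1⁻} u(β)/(αφ(β)) ≥ 1, then u(β) ≥ α φ(β) for all β ∈ (0,1). -/

import Mathlib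

open Filter

/-- `u` is a viscosity supersolution of `ψ(1 + (ψ'/(n−1))²)^((n−1)/2) = 1/λ` on `I`:
for every `β₀ ∈ I` and every `C²` test function `ψ` with `ψ ≤ u` near `β₀` (within `I`)
and `ψ(β₀) = u(β₀)`, one has `ψ(β₀)(1 + (ψ'(β₀)/(n−1))²)^((n−1)/2) ≥ 1/λ`. -/
def IsViscositySupersolution1 (n : ℕ) (lam : ℝ) (I : Set ℝ) (u : ℝ → ℝ) : Prop :=
  ∀ β₀ ∈ I, ∀ ψ : ℝ → ℝ, ContDiffAt ℝ 2 ψ β₀ →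
    (∀ᶠ β in nhdsWithin β₀ I, ψ β ≤ u β) → ψ β₀ = u β₀ →
    ψ β₀ * (1 + (deriv ψ β₀ / ((n : ℝ) - 1)) ^ 2) ^ (((n : ℝ) - 1) / 2) ≥ 1 / lam

/-! If `u < αφ` somewhere, the ratio `u / (αφ)` takes a value below `1` while its liminf at both
ends is at least `1`, so it attains its infimum `m < 1` at some `β₀ ∈ (0,1)`. The function `tφ`,
`t = mα < α`, then touches `u` from below at `β₀`, and the supersolution property gives
`tφ (1 + t²p²)^((n-1)/2) ≥ 1/λ` at `β₀`, where `p = φ'(β₀)/(n-1)`. But for `t < α` with `α ≥ 1`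
the factor `t (1 + t²p²)^((n-1)/2)` is below `α^n (1 + p²)^((n-1)/2)` (compare `1 + t²p²` with
`1 + p²` when `t ≤ 1` and with `t²(1 + p²)` when `t > 1`), and by the equation of `φ` the right
side becomes `α^n / γ = 1/λ`. -/

open Set Topology

lemma mul_one_add_sq_rpow_lt {n : ℕ} (hn : 1 ≤ n) {α t : ℝ} (hα : 1 ≤ α) (ht : t < α) (p : ℝ) :
    t * (1 + (t * p) ^ 2) ^ (((n : ℝ) - 1) / 2) < α ^ n * (1 + p ^ 2) ^ (((n : ℝ) - 1) / 2) := by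
  set A : ℝ := ((n : ℝ) - 1) / 2
  have hA : 0 ≤ A := by
    have : (1 : ℝ) ≤ n := by exact_mod_cast hn
    simp only [A]; linarith
  rcases le_or_gt t 0 with ht0 | ht0
  · calc t * (1 + (t * p) ^ 2) ^ A ≤ 0 := mul_nonpos_of_nonpos_of_nonneg ht0 (by positivity)
      _ < α ^ n * (1 + p ^ 2) ^ A := by positivity
  rcases le_or_gt t 1 with ht1 | ht1
  · calc t * (1 + (t * p) ^ 2) ^ A ≤ t * (1 + p ^ 2) ^ A := by
          gcongr 2
          nlinarith [mul_le_one₀ ht1 ht0.le ht1, sq_nonneg p]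
      _ < α ^ n * (1 + p ^ 2) ^ A := by
          gcongr
          exact ht.trans_le (le_self_pow₀ hα (by omega))
  · calc t * (1 + (t * p) ^ 2) ^ A ≤ t * (t ^ 2 * (1 + p ^ 2)) ^ A := by
          gcongr
          nlinarith
      _ = t ^ n * (1 + p ^ 2) ^ A := by
          rw [Real.mul_rpow (by positivity) (by positivity), ← mul_assoc, ← Real.rpow_natCast t 2,
            ← Real.rpow_mul ht0.le, ← Real.rpow_one_add' ht0.le (by positivity),
            ← Real.rpow_natCast t n]
          congr 2
          simp only [A]
          ring
      _ < α ^ n * (1 + p ^ 2) ^ A := by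
          gcongr

lemma eventually_lt_of_one_le_liminf {ι : Type*} {l : Filter ι} {f : ι → ℝ} {c : ℝ}
    (h : (1 : EReal) ≤ liminf (fun x => (f x : EReal)) l) (hc : c < 1) : ∀ᶠ x in l, c < f x :=
  (eventually_lt_of_lt_liminf ((EReal.coe_lt_coe_iff.mpr hc).trans_le h)).mono
    fun _ hx => EReal.coe_lt_coe_iff.mp hx

lemma ContinuousOn.exists_isMinOn_Ioo {v : ℝ → ℝ} {a b x₁ : ℝ} (hv : ContinuousOn v (Ioo a b))
    (hx₁ : x₁ ∈ Ioo a b) (ha : ∀ᶠ x in 𝓝[Ioo a b] a, v x₁ < v x)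
    (hb : ∀ᶠ x in 𝓝[Ioo a b] b, v x₁ < v x) : ∃ x₀ ∈ Ioo a b, IsMinOn v (Ioo a b) x₀ := by
  have hab : a < b := hx₁.1.trans hx₁.2
  rw [nhdsWithin_Ioo_eq_nhdsGT hab] at ha
  rw [nhdsWithin_Ioo_eq_nhdsLT hab] at hb
  obtain ⟨a', ha', ha'v⟩ := mem_nhdsGT_iff_exists_Ioo_subset.mp ha
  obtain ⟨b', hb', hb'v⟩ := mem_nhdsLT_iff_exists_Ioo_subset.mp hb
  set K := Icc (min a' x₁) (max b' x₁)
  have hK : K ⊆ Ioo a b := Icc_subset_Ioo (lt_min ha' hx₁.1) (max_lt hb' hx₁.2)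
  have hx₁K : x₁ ∈ K := ⟨min_le_right _ _, le_max_right _ _⟩
  obtain ⟨x₀, hx₀K, hx₀⟩ := isCompact_Icc.exists_isMinOn ⟨x₁, hx₁K⟩ (hv.mono hK)
  refine ⟨x₀, hK hx₀K, fun x hx => ?_⟩
  by_cases hxK : x ∈ K
  · exact hx₀ hxK
  · refine (hx₀ hx₁K).trans (le_of_lt (show v x₁ < v x from ?_))
    rcases not_and_or.mp hxK with hxa | hxb
    · exact ha'v ⟨hx.1, (not_le.mp hxa).trans_le (min_le_left _ _)⟩
    · exact hb'v ⟨(le_max_left _ _).trans_lt (not_le.mp hxb), hx.2⟩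

theorem first_order_viscosity_comparison_general
    (n : ℕ) (hn : 2 ≤ n) (γ lam : ℝ) (hlam : 0 < lam) (hγlam : lam ≤ γ)
    (α : ℝ) (hα : α = (γ / lam) ^ ((1 : ℝ) / (n : ℝ)))
    (u φ : ℝ → ℝ)
    (hφ_pos : ∀ β ∈ Set.Ioo (0 : ℝ) 1, 0 < φ β)
    (hφ_C2 : ∀ β ∈ Set.Ioo (0 : ℝ) 1, ContDiffAt ℝ 2 φ β)
    (hφ_eq : ∀ β ∈ Set.Ioo (0 : ℝ) 1,
      φ β * (1 + (deriv φ β / ((n : ℝ) - 1)) ^ 2) ^ (((n : ℝ) - 1) / 2) = 1 / γ)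
    (hu_cont : ContinuousOn u (Set.Ioo 0 1))
    (hu_visc : IsViscositySupersolution1 n lam (Set.Ioo 0 1) u)
    (h0 : (1 : EReal) ≤ Filter.liminf (fun β => ((u β / (α * φ β) : ℝ) : EReal))
      (nhdsWithin 0 (Set.Ioo (0 : ℝ) 1)))
    (h1 : (1 : EReal) ≤ Filter.liminf (fun β => ((u β / (α * φ β) : ℝ) : EReal))
      (nhdsWithin 1 (Set.Ioo (0 : ℝ) 1))) :
    ∀ β ∈ Set.Ioo (0 : ℝ) 1, α * φ β ≤ u β := by
  have hγ : 0 < γ := hlam.trans_le hγlam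
  have hα1 : 1 ≤ α := hα ▸ Real.one_le_rpow ((one_le_div hlam).mpr hγlam) (by positivity)
  have hαn : α ^ n = γ / lam := by
    rw [hα, one_div]
    exact Real.rpow_inv_natCast_pow (div_pos hγ hlam).le (by omega)
  have hden : ∀ β ∈ Ioo (0 : ℝ) 1, 0 < α * φ β := fun β hβ =>
    mul_pos (zero_lt_one.trans_le hα1) (hφ_pos β hβ)
  intro β₁ hβ₁
  by_contra! hβ₁lt
  set v : ℝ → ℝ := fun β => u β / (α * φ β)
  have hv₁ : v β₁ < 1 := (div_lt_one (hden β₁ hβ₁)).mpr hβ₁lt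
  have hv : ContinuousOn v (Ioo 0 1) :=
    hu_cont.div (continuousOn_const.mul fun β hβ => (hφ_C2 β hβ).continuousAt.continuousWithinAt)
      fun β hβ => (hden β hβ).ne'
  obtain ⟨β₀, hβ₀, hmin⟩ := hv.exists_isMinOn_Ioo hβ₁
    (eventually_lt_of_one_le_liminf h0 hv₁) (eventually_lt_of_one_le_liminf h1 hv₁)
  set t := v β₀ * α
  have ht : t < α := mul_lt_of_lt_one_left (zero_lt_one.trans_le hα1) ((hmin hβ₁).trans_lt hv₁)
  have htouch : ∀ β ∈ Ioo (0 : ℝ) 1, t * φ β ≤ u β := fun β hβ => by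
    rw [mul_assoc]
    exact (le_div_iff₀ (hden β hβ)).mp (hmin hβ)
  have hβ₀eq : t * φ β₀ = u β₀ := by
    rw [mul_assoc]
    exact div_mul_cancel₀ _ (hden β₀ hβ₀).ne'
  have hsuper := hu_visc β₀ hβ₀ (fun β => t * φ β) (contDiffAt_const.mul (hφ_C2 β₀ hβ₀))
    (eventually_nhdsWithin_of_forall htouch) hβ₀eq
  rw [deriv_const_mul _ ((hφ_C2 β₀ hβ₀).differentiableAt two_ne_zero), mul_div_assoc] at hsuper
  set p := deriv φ β₀ / ((n : ℝ) - 1)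
  set A := ((n : ℝ) - 1) / 2
  refine absurd hsuper (not_le.mpr ?_)
  calc t * φ β₀ * (1 + (t * p) ^ 2) ^ A = φ β₀ * (t * (1 + (t * p) ^ 2) ^ A) := by ring
    _ < φ β₀ * (α ^ n * (1 + p ^ 2) ^ A) :=
        mul_lt_mul_of_pos_left (mul_one_add_sq_rpow_lt (by omega) hα1 ht p) (hφ_pos β₀ hβ₀)
    _ = α ^ n * (φ β₀ * (1 + p ^ 2) ^ A) := by ring
    _ = 1 / lam := by
        rw [hφ_eq β₀ hβ₀, hαn]
        field_simp [hγ.ne']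

theorem first_order_viscosity_comparison
    (n : ℕ) (hn : 2 ≤ n) (γ lam : ℝ) (hlam : 0 < lam) (hγlam : lam ≤ γ)
    (α : ℝ) (hα : α = (γ / lam) ^ ((1 : ℝ) / (n : ℝ)))
    (u φ : ℝ → ℝ)
    (hφ_pos : ∀ β ∈ Set.Ioo (0 : ℝ) 1, 0 < φ β)
    (hφ_C2 : ∀ β ∈ Set.Ioo (0 : ℝ) 1, ContDiffAt ℝ 2 φ β)
    (hφ_eq : ∀ β ∈ Set.Ioo (0 : ℝ) 1,
      φ β * (1 + (deriv φ β / ((n : ℝ) - 1)) ^ 2) ^ (((n : ℝ) - 1) / 2) = 1 / γ)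
    (hu_cont : ContinuousOn u (Set.Ioo 0 1))
    (hu_pos : ∀ β ∈ Set.Ioo (0 : ℝ) 1, 0 < u β)
    (hu_visc : IsViscositySupersolution1 n lam (Set.Ioo 0 1) u)
    (h0 : (1 : EReal) ≤ Filter.liminf (fun β => ((u β / (α * φ β) : ℝ) : EReal))
      (nhdsWithin 0 (Set.Ioo (0 : ℝ) 1)))
    (h1 : (1 : EReal) ≤ Filter.liminf (fun β => ((u β / (α * φ β) : ℝ) : EReal))
      (nhdsWithin 1 (Set.Ioo (0 : ℝ) 1))) :
    ∀ β ∈ Set.Ioo (0 : ℝ) 1, α * φ β ≤ u β :=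
  first_order_viscosity_comparison_general n hn γ lam hlam hγlam α hα u φ hφ_pos hφ_C2 hφ_eq hu_cont
    hu_visc h0 h1
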